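/- arXiv:2411.15503 — 6 statements merged into one kernel-verified Lean document; each statement's English description precedes it below -/
import Mathlib

section
/- The ℤ-module O = ⟨1, ξ, λ, λξ⟩_ℤ has index 3 in the maximal order O_K = ⟨1, α, α²/5, α³/5⟩_ℤ, where α = √5·e^{2πi/12}. -/
noncomputable def xi : ℂ := (1 + Complex.I * (Real.sqrt 3 : ℂ)) / 2
noncomputable def lam : ℂ := 4 + (Real.sqrt 15 : ℂ)
/-- α = √5 · e^{2πi/12}. -/
noncomputable def alphaC : ℂ :=
  (Real.sqrt 5 : ℂ) * ((Real.sqrt 3 : ℂ) / 2 + Complex.I / 2)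
/-- O = ⟨1, ξ, λ, λξ⟩_ℤ as an additive subgroup of ℂ. -/
noncomputable def OAdd : AddSubgroup ℂ :=
  AddSubgroup.closure {1, xi, lam, lam * xi}
/-- The maximal order O_K = ⟨1, α, α²/5, α³/5⟩_ℤ as an additive subgroup of ℂ. -/
noncomputable def OKAdd : AddSubgroup ℂ :=
  AddSubgroup.closure {1, alphaC, alphaC ^ 2 / 5, alphaC ^ 3 / 5}

lemma c3 : (Real.sqrt 3 : ℂ) ^ 2 = 3 := by
  rw [← Complex.ofReal_pow, Real.sq_sqrt (by norm_num)]; norm_num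

lemma c5 : (Real.sqrt 5 : ℂ) ^ 2 = 5 := by
  rw [← Complex.ofReal_pow, Real.sq_sqrt (by norm_num)]; norm_num

lemma c15 : (Real.sqrt 15 : ℂ) = (Real.sqrt 3 : ℂ) * (Real.sqrt 5 : ℂ) := by
  rw [← Complex.ofReal_mul, show (15:ℝ) = 3*5 by norm_num, Real.sqrt_mul (by norm_num)]

lemma id_xi : alphaC ^ 2 / 5 = xi := by
  unfold alphaC xi
  rw [div_eq_iff (by norm_num)]
  linear_combination ((Real.sqrt 3:ℂ)^2/4 + (Real.sqrt 3:ℂ)*Complex.I/2 + Complex.I^2/4) * c5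
    + (5/4 : ℂ) * c3 + (5/4 : ℂ) * Complex.I_sq

lemma xi_mul_alpha : xi * alphaC = Complex.I * (Real.sqrt 5 : ℂ) := by
  unfold alphaC xi
  linear_combination ((Real.sqrt 5:ℂ) * (Real.sqrt 3:ℂ)/4) * Complex.I_sq
    + ((Real.sqrt 5:ℂ) * Complex.I/4) * c3

lemma id_w : alphaC ^ 3 / 5 = Complex.I * (Real.sqrt 5 : ℂ) := by
  have h2 : alphaC ^ 3 / 5 = (alphaC ^ 2 / 5) * alphaC := by ring
  rw [h2, id_xi, xi_mul_alpha]

lemma id_lam : lam = 4 * (1:ℂ) + 2 * alphaC - alphaC ^ 3 / 5 := by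
  rw [id_w]; unfold lam alphaC
  rw [c15]; ring

lemma id_lamxi : lam * xi = alphaC + 4 * (alphaC ^ 2 / 5) + alphaC ^ 3 / 5 := by
  rw [id_xi, id_w]; unfold lam xi alphaC
  rw [c15]
  linear_combination (2*Complex.I*(Real.sqrt 5:ℂ)) * c3 + (-3*(Real.sqrt 5:ℂ)*Complex.I/2) * c3

lemma id_3a : (3:ℂ) * alphaC = -4 * (1:ℂ) + -4 * xi + lam + lam * xi := by
  unfold lam xi alphaC
  rw [c15]
  linear_combination (-Complex.I*(Real.sqrt 5:ℂ)/2) * c3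

lemma id_wa : alphaC ^ 3 / 5 - 2 * alphaC = 4 * (1:ℂ) - lam := by
  rw [id_w]; unfold lam alphaC
  rw [c15]; ring

-- generators of OAdd
lemma m1 : (1:ℂ) ∈ OAdd := AddSubgroup.subset_closure (by simp)
lemma mxi : xi ∈ OAdd := AddSubgroup.subset_closure (by simp)
lemma mlam : lam ∈ OAdd := AddSubgroup.subset_closure (by simp)
lemma mlx : lam * xi ∈ OAdd := AddSubgroup.subset_closure (by simp)

lemma zmul_mem {H : AddSubgroup ℂ} {z : ℂ} (h : z ∈ H) (n : ℤ) : (n:ℂ) * z ∈ H := by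
  simpa [zsmul_eq_mul] using AddSubgroup.zsmul_mem H h n

lemma mem_3a : (3:ℂ) * alphaC ∈ OAdd := by
  rw [id_3a]
  exact add_mem (add_mem (add_mem
    (by simpa using zmul_mem m1 (-4)) (by simpa using zmul_mem mxi (-4))) mlam) mlx

-- generators of OKAdd
lemma k1 : (1:ℂ) ∈ OKAdd := AddSubgroup.subset_closure (by simp)
lemma ka : alphaC ∈ OKAdd := AddSubgroup.subset_closure (by simp)
lemma k2 : alphaC ^ 2 / 5 ∈ OKAdd := AddSubgroup.subset_closure (by simp)
lemma k3 : alphaC ^ 3 / 5 ∈ OKAdd := AddSubgroup.subset_closure (by simp)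

lemma hle : OAdd ≤ OKAdd := by
  rw [show OAdd = AddSubgroup.closure {1, xi, lam, lam * xi} from rfl,
    AddSubgroup.closure_le]
  intro x hx
  simp only [Set.mem_insert_iff, Set.mem_singleton_iff] at hx
  rcases hx with h | h | h | h <;> subst h
  · exact k1
  · rw [← id_xi]; exact k2
  · rw [id_lam]
    exact sub_mem (add_mem (by simpa using zmul_mem k1 4) (by simpa using zmul_mem ka 2)) k3
  · rw [id_lamxi]
    exact add_mem (add_mem ka (by simpa using zmul_mem k2 4)) k3

lemma rep_OAdd {z : ℂ} (hz : z ∈ OAdd) :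
    ∃ A B C D : ℤ, z = A + B * xi + C * lam + D * (lam * xi) := by
  induction hz using AddSubgroup.closure_induction with
  | mem x hx =>
    simp only [Set.mem_insert_iff, Set.mem_singleton_iff] at hx
    rcases hx with h | h | h | h <;> subst h
    · exact ⟨1,0,0,0, by push_cast; ring⟩
    · exact ⟨0,1,0,0, by push_cast; ring⟩
    · exact ⟨0,0,1,0, by push_cast; ring⟩
    · exact ⟨0,0,0,1, by push_cast; ring⟩
  | zero => exact ⟨0,0,0,0, by push_cast; ring⟩
  | add x y hx hy ihx ihy =>
    obtain ⟨A,B,C,D,h1⟩ := ihx; obtain ⟨A',B',C',D',h2⟩ := ihy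
    exact ⟨A+A', B+B', C+C', D+D', by rw [h1, h2]; push_cast; ring⟩
  | neg x hx ih =>
    obtain ⟨A,B,C,D,h1⟩ := ih
    exact ⟨-A,-B,-C,-D, by rw [h1]; push_cast; ring⟩

lemma irr15 : Irrational (Real.sqrt 15) := by
  rw [show (15:ℝ) = ((15:ℕ):ℝ) by norm_num]
  exact irrational_sqrt_natCast_iff.mpr (by rintro ⟨m, hm⟩; rcases Nat.lt_or_ge m 4 with h | h <;> nlinarith)

lemma alpha_not_mem : alphaC ∉ OAdd := by
  intro h
  obtain ⟨A,B,C,D,hrep⟩ := rep_OAdd h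
  have him := congrArg Complex.im hrep
  simp only [alphaC, xi, lam, Complex.add_im, Complex.mul_im, Complex.div_im,
    Complex.ofReal_im, Complex.ofReal_re, Complex.I_im, Complex.I_re, Complex.one_im,
    Complex.one_re, Complex.intCast_im, Complex.intCast_re, Complex.add_re, Complex.mul_re,
    Complex.div_re, Complex.normSq_ofNat, Complex.re_ofNat, Complex.im_ofNat] at him
  norm_num at him
  have r3 : Real.sqrt 3 * Real.sqrt 3 = 3 := Real.mul_self_sqrt (by norm_num)
  have r15 : Real.sqrt 15 = Real.sqrt 3 * Real.sqrt 5 := by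
    rw [show (15:ℝ) = 3*5 by norm_num, Real.sqrt_mul (by norm_num)]
  have key : Real.sqrt 15 * (1 - 3*(D:ℝ)) = 3*((B:ℝ) + 4*(D:ℝ)) := by
    rw [r15]
    linear_combination (2*Real.sqrt 3) * him + ((B:ℝ) + (D:ℝ)*(4 + Real.sqrt 3 * Real.sqrt 5)) * r3 + (Real.sqrt 3^2 * (D:ℝ)) * r15
  have hD : (1:ℝ) - 3*(D:ℝ) ≠ 0 := by
    intro h0
    have : (1:ℤ) - 3*D = 0 := by exact_mod_cast h0
    omega
  exact irr15 ⟨(3*((B:ℚ)+4*(D:ℚ)))/(1-3*(D:ℚ)), by push_cast; field_simp; linarith [key]⟩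

lemma surj_aux {z : ℂ} (hz : z ∈ OKAdd) : ∃ n : ℤ, z - n • alphaC ∈ OAdd := by
  induction hz using AddSubgroup.closure_induction with
  | mem x hx =>
    simp only [Set.mem_insert_iff, Set.mem_singleton_iff] at hx
    rcases hx with h | h | h | h <;> subst h
    · exact ⟨0, by simpa using m1⟩
    · exact ⟨1, by simpa using zero_mem OAdd⟩
    · exact ⟨0, by rw [id_xi]; simpa using mxi⟩
    · refine ⟨2, ?_⟩
      have : alphaC ^ 3 / 5 - (2:ℤ) • alphaC = 4 * (1:ℂ) - lam := by
        rw [← id_wa]; push_cast [zsmul_eq_mul]; ring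
      rw [this]
      exact sub_mem (by simpa using zmul_mem m1 4) mlam
  | zero => exact ⟨0, by simpa using zero_mem OAdd⟩
  | add x y hx hy ihx ihy =>
    obtain ⟨n, hn⟩ := ihx; obtain ⟨m, hm⟩ := ihy
    refine ⟨n + m, ?_⟩
    have : x + y - (n + m) • alphaC = (x - n • alphaC) + (y - m • alphaC) := by
      rw [add_zsmul]; ring
    rw [this]; exact add_mem hn hm
  | neg x hx ih =>
    obtain ⟨n, hn⟩ := ih
    refine ⟨-n, ?_⟩
    have : -x - (-n) • alphaC = -(x - n • alphaC) := by rw [neg_zsmul]; ring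
    rw [this]; exact neg_mem hn

/-- O has index 3 in the maximal order O_K. -/
theorem O_index_three :
    OAdd ≤ OKAdd ∧ (OAdd.addSubgroupOf OKAdd).index = 3 := by
  refine ⟨hle, ?_⟩
  haveI : Fact (Nat.Prime 3) := ⟨by norm_num⟩
  set H := OAdd.addSubgroupOf OKAdd with hH
  let a : OKAdd := ⟨alphaC, ka⟩
  let x : OKAdd ⧸ H := QuotientAddGroup.mk a
  have h3x : (3:ℕ) • x = 0 := by
    show QuotientAddGroup.mk ((3:ℕ) • a) = 0
    rw [QuotientAddGroup.eq_zero_iff]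
    show ((((3:ℕ) • a : OKAdd)) : ℂ) ∈ OAdd
    have : ((((3:ℕ) • a : OKAdd)) : ℂ) = (3:ℂ) * alphaC := by
      push_cast [nsmul_eq_mul]; rfl
    rw [this]; exact mem_3a
  have hxne : x ≠ 0 := by
    intro h0
    rw [QuotientAddGroup.eq_zero_iff] at h0
    exact alpha_not_mem h0
  have horder : addOrderOf x = 3 := addOrderOf_eq_prime h3x hxne
  have hgen : AddSubgroup.zmultiples x = ⊤ := by
    rw [eq_top_iff]
    rintro q -
    induction q using QuotientAddGroup.induction_on with
    | H z =>
      obtain ⟨n, hn⟩ := surj_aux z.2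
      refine ⟨n, ?_⟩
      show n • x = QuotientAddGroup.mk z
      show QuotientAddGroup.mk (n • a) = QuotientAddGroup.mk z
      rw [QuotientAddGroup.eq_iff_sub_mem]
      show (((n • a - z : OKAdd)) : ℂ) ∈ OAdd
      have : (((n • a - z : OKAdd)) : ℂ) = -((z:ℂ) - n • alphaC) := by
        push_cast; ring
      rw [this]; exact neg_mem hn
  rw [AddSubgroup.index_eq_card, ← AddSubgroup.card_top, ← hgen,
    Nat.card_zmultiples, horder]
end

section
/- One has i√3 · O_K ⊆ O ⊆ O_K, with each inclusion of index 3, where O = ℤ[ξ, λ] and O_K is the maximal order of K = ℚ(√−3, √−5). -/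
/-- i√3 · O_K, the image of O_K under multiplication by i√3. -/
noncomputable def JAdd : AddSubgroup ℂ :=
  OKAdd.map (AddMonoidHom.mulLeft (Complex.I * (Real.sqrt 3 : ℂ)))

namespace ChainAux

open Complex AddSubgroup

/-! ### Basic real/complex algebraic identities -/

noncomputable def s3 : ℂ := (Real.sqrt 3 : ℝ)
noncomputable def s5 : ℂ := (Real.sqrt 5 : ℝ)
noncomputable def mu : ℂ := Complex.I * s3

lemma h3 : s3 ^ 2 = 3 := by
  rw [s3, ← Complex.ofReal_pow, Real.sq_sqrt (by norm_num : (0:ℝ) ≤ 3)]; norm_num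

lemma h5 : s5 ^ 2 = 5 := by
  rw [s5, ← Complex.ofReal_pow, Real.sq_sqrt (by norm_num : (0:ℝ) ≤ 5)]; norm_num

lemma hI : Complex.I ^ 2 = -1 := Complex.I_sq

lemma e15 : ((Real.sqrt 15 : ℝ) : ℂ) = s3 * s5 := by
  rw [show (15:ℝ) = 3 * 5 by norm_num, Real.sqrt_mul (by norm_num : (0:ℝ) ≤ 3)]
  push_cast [s3, s5]; ring

lemma c_xi : xi = (1 + Complex.I * s3) / 2 := rfl
lemma c_lam : lam = 4 + s3 * s5 := by rw [lam, e15]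
lemma c_alpha : alphaC = (s3 * s5) / 2 + (Complex.I * s5) / 2 := by
  rw [alphaC]
  rw [show ((Real.sqrt 5:ℝ):ℂ) = s5 from rfl, show ((Real.sqrt 3:ℝ):ℂ) = s3 from rfl]; ring
lemma c_lamxi : lam * xi = 2 + (s3 * s5) / 2 + 2 * (Complex.I * s3) + (3/2) * (Complex.I * s5) := by
  rw [c_lam, c_xi]; linear_combination (Complex.I * s5 / 2) * h3
lemma c_alpha2 : alphaC ^ 2 / 5 = (1 + Complex.I * s3) / 2 := by
  rw [c_alpha]; linear_combination ((s3 + Complex.I)^2/20) * h5 + (1/4) * h3 + (1/4) * hI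
lemma c_alpha3 : alphaC ^ 3 / 5 = Complex.I * s5 := by
  have h : alphaC ^ 3 / 5 = alphaC * (alphaC ^ 2 / 5) := by ring
  rw [h, c_alpha2, c_alpha]
  linear_combination (Complex.I * s5 / 4) * h3 + (s3 * s5 / 4) * hI
lemma c_mu1 : mu * 1 = Complex.I * s3 := by rw [mu]; ring
lemma c_mualpha : mu * alphaC = -(s3 * s5) / 2 + (3/2) * (Complex.I * s5) := by
  rw [mu, c_alpha]; linear_combination (Complex.I * s5 / 2) * h3 + (s3 * s5 / 2) * hI
lemma c_mu2 : mu * (alphaC ^ 2 / 5) = -(3/2) + (Complex.I * s3) / 2 := by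
  rw [c_alpha2, mu]; linear_combination (Complex.I^2/2) * h3 + (3/2) * hI
lemma c_mu3 : mu * (alphaC ^ 3 / 5) = -(s3 * s5) := by
  rw [c_alpha3, mu]; linear_combination (s3 * s5) * hI

/-! ### A rational coordinate functional -/

noncomputable def v : Fin 4 → ℂ :=
  ![1, (Real.sqrt 15 : ℂ), Complex.I * (Real.sqrt 3 : ℂ), Complex.I * (Real.sqrt 5 : ℂ)]

lemma irr15 : Irrational (Real.sqrt 15) := by
  refine irrational_nrt_of_notint_nrt 2 15 ?_ ?_ (by norm_num)
  · rw [sq, Real.mul_self_sqrt (by norm_num : (0:ℝ) ≤ 15)]; norm_num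
  · rintro ⟨y, hy⟩
    have h0 : (0:ℝ) ≤ Real.sqrt 15 := Real.sqrt_nonneg _
    have h2 : Real.sqrt 15 ^ 2 = 15 := Real.sq_sqrt (by norm_num)
    rw [hy] at h0 h2
    have hy0 : 0 ≤ y := by exact_mod_cast h0
    have hy2 : y ^ 2 = 15 := by exact_mod_cast h2
    have hy4 : y ≤ 4 := by nlinarith
    interval_cases y <;> omega

lemma sqrt15_eq : Real.sqrt 15 = Real.sqrt 3 * Real.sqrt 5 := by
  rw [← Real.sqrt_mul (by norm_num : (0:ℝ) ≤ 3)]; norm_num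

lemma rat_sqrt15 (a b : ℚ) (h : (a:ℝ) + b * Real.sqrt 15 = 0) : a = 0 ∧ b = 0 := by
  rcases eq_or_ne b 0 with hb | hb
  · subst hb; simp at h; constructor <;> [exact_mod_cast h; rfl]
  · exfalso
    apply irr15
    refine ⟨-a/b, ?_⟩
    have hb' : (b:ℝ) ≠ 0 := by exact_mod_cast hb
    push_cast
    field_simp
    linarith

lemma li_v : LinearIndependent ℚ v := by
  rw [Fintype.linearIndependent_iff]
  intro g hg
  have h0 := congrArg Complex.re hg
  have h1 := congrArg Complex.im hg
  simp [v, Fin.sum_univ_four, Rat.smul_def] at h0 h1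
  have e0 := rat_sqrt15 (g 0) (g 1) h0
  have h1' : ((3 * g 2 : ℚ) : ℝ) + (g 3 : ℚ) * Real.sqrt 15 = 0 := by
    have h3 : Real.sqrt 3 * Real.sqrt 3 = 3 := Real.mul_self_sqrt (by norm_num)
    have := congrArg (· * Real.sqrt 3) h1
    simp only [add_mul, mul_assoc, zero_mul] at this
    rw [h3, mul_comm (Real.sqrt 5)] at this
    rw [sqrt15_eq]
    push_cast
    linarith
  have e1 := rat_sqrt15 (3 * g 2) (g 3) h1'
  intro i
  fin_cases i
  · exact e0.1
  · exact e0.2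
  · have := e1.1; simpa using by linarith [this]
  · exact e1.2

noncomputable def PhiSpec :
    { F : ℂ →ₗ[ℚ] (Fin 4 → ℚ) // ∀ i, F (v i) = Pi.single i 1 } := by
  classical
  have li := li_v
  let f : (Submodule.span ℚ (Set.range v)) →ₗ[ℚ] (Fin 4 → ℚ) :=
    (Finsupp.linearEquivFunOnFinite ℚ ℚ (Fin 4)).toLinearMap.comp li.repr
  let g := (LinearMap.exists_extend f).choose
  have hg := (LinearMap.exists_extend f).choose_spec
  refine ⟨g, fun i => ?_⟩
  have hvmem : v i ∈ Submodule.span ℚ (Set.range v) := Submodule.subset_span ⟨i, rfl⟩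
  have h2 : g (v i) = f ⟨v i, hvmem⟩ := by
    have := LinearMap.congr_fun hg ⟨v i, hvmem⟩
    simpa using this
  rw [h2]
  show (Finsupp.linearEquivFunOnFinite ℚ ℚ (Fin 4)) (li.repr ⟨v i, hvmem⟩) = _
  rw [li.repr_eq_single i ⟨v i, hvmem⟩ rfl]
  ext j
  simp [Finsupp.single_eq_pi_single]

noncomputable def Phi : ℂ →ₗ[ℚ] (Fin 4 → ℚ) := PhiSpec.1

lemma Phi_v (i : Fin 4) : Phi (v i) = Pi.single i 1 := PhiSpec.2 i

lemma Phi_combo (a b c d : ℚ) :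
    Phi ((a:ℂ) + (b:ℂ) * (s3 * s5) + (c:ℂ) * (Complex.I * s3) + (d:ℂ) * (Complex.I * s5))
      = ![a, b, c, d] := by
  have hv : (a:ℂ) + (b:ℂ) * (s3 * s5) + (c:ℂ) * (Complex.I * s3) + (d:ℂ) * (Complex.I * s5)
      = a • v 0 + b • v 1 + c • v 2 + d • v 3 := by
    rw [show v 0 = 1 from rfl, show v 1 = ((Real.sqrt 15:ℝ):ℂ) from rfl,
      show v 2 = Complex.I * s3 from rfl, show v 3 = Complex.I * s5 from rfl, e15]
    simp only [Rat.smul_def]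
    ring
  rw [hv]
  simp only [map_add, map_smul, Phi_v]
  funext j
  fin_cases j <;> simp [Pi.single_apply]

/-! ### The two functionals -/

noncomputable def G1 : ℂ →+ ℚ where
  toFun z := 3 * Phi z 1 + Phi z 3
  map_zero' := by simp
  map_add' x y := by simp; ring

noncomputable def G2 : ℂ →+ ℚ where
  toFun z := 2 * Phi z 0
  map_zero' := by simp
  map_add' x y := by simp; ring

lemma G1_apply (z : ℂ) : G1 z = 3 * Phi z 1 + Phi z 3 := rfl
lemma G2_apply (z : ℂ) : G2 z = 2 * Phi z 0 := rfl

/-! ### Values of Phi on generators -/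

lemma Phi_one : Phi 1 = ![1, 0, 0, 0] := by
  rw [show (1:ℂ) = ((1:ℚ):ℂ) + ((0:ℚ):ℂ)*(s3*s5) + ((0:ℚ):ℂ)*(Complex.I*s3)
      + ((0:ℚ):ℂ)*(Complex.I*s5) by push_cast; ring]
  exact Phi_combo _ _ _ _

lemma Phi_xi : Phi xi = ![1/2, 0, 1/2, 0] := by
  rw [show xi = ((1/2:ℚ):ℂ) + ((0:ℚ):ℂ)*(s3*s5) + ((1/2:ℚ):ℂ)*(Complex.I*s3)
      + ((0:ℚ):ℂ)*(Complex.I*s5) by rw [c_xi]; push_cast; ring]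
  exact Phi_combo _ _ _ _

lemma Phi_lam : Phi lam = ![4, 1, 0, 0] := by
  rw [show lam = ((4:ℚ):ℂ) + ((1:ℚ):ℂ)*(s3*s5) + ((0:ℚ):ℂ)*(Complex.I*s3)
      + ((0:ℚ):ℂ)*(Complex.I*s5) by rw [c_lam]; push_cast; ring]
  exact Phi_combo _ _ _ _

lemma Phi_lamxi : Phi (lam * xi) = ![2, 1/2, 2, 3/2] := by
  rw [show lam * xi = ((2:ℚ):ℂ) + ((1/2:ℚ):ℂ)*(s3*s5) + ((2:ℚ):ℂ)*(Complex.I*s3)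
      + ((3/2:ℚ):ℂ)*(Complex.I*s5) by rw [c_lamxi]; push_cast; ring]
  exact Phi_combo _ _ _ _

lemma Phi_alpha : Phi alphaC = ![0, 1/2, 0, 1/2] := by
  rw [show alphaC = ((0:ℚ):ℂ) + ((1/2:ℚ):ℂ)*(s3*s5) + ((0:ℚ):ℂ)*(Complex.I*s3)
      + ((1/2:ℚ):ℂ)*(Complex.I*s5) by rw [c_alpha]; push_cast; ring]
  exact Phi_combo _ _ _ _

lemma Phi_alpha2 : Phi (alphaC ^ 2 / 5) = ![1/2, 0, 1/2, 0] := by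
  rw [show alphaC ^ 2 / 5 = ((1/2:ℚ):ℂ) + ((0:ℚ):ℂ)*(s3*s5) + ((1/2:ℚ):ℂ)*(Complex.I*s3)
      + ((0:ℚ):ℂ)*(Complex.I*s5) by rw [c_alpha2]; push_cast; ring]
  exact Phi_combo _ _ _ _

lemma Phi_alpha3 : Phi (alphaC ^ 3 / 5) = ![0, 0, 0, 1] := by
  rw [show alphaC ^ 3 / 5 = ((0:ℚ):ℂ) + ((0:ℚ):ℂ)*(s3*s5) + ((0:ℚ):ℂ)*(Complex.I*s3)
      + ((1:ℚ):ℂ)*(Complex.I*s5) by rw [c_alpha3]; push_cast; ring]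
  exact Phi_combo _ _ _ _

lemma Phi_mu1 : Phi (mu * 1) = ![0, 0, 1, 0] := by
  rw [show mu * 1 = ((0:ℚ):ℂ) + ((0:ℚ):ℂ)*(s3*s5) + ((1:ℚ):ℂ)*(Complex.I*s3)
      + ((0:ℚ):ℂ)*(Complex.I*s5) by rw [c_mu1]; push_cast; ring]
  exact Phi_combo _ _ _ _

lemma Phi_mualpha : Phi (mu * alphaC) = ![0, -(1/2), 0, 3/2] := by
  rw [show mu * alphaC = ((0:ℚ):ℂ) + ((-(1/2):ℚ):ℂ)*(s3*s5) + ((0:ℚ):ℂ)*(Complex.I*s3)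
      + ((3/2:ℚ):ℂ)*(Complex.I*s5) by rw [c_mualpha]; push_cast; ring]
  exact Phi_combo _ _ _ _

lemma Phi_mu2 : Phi (mu * (alphaC ^ 2 / 5)) = ![-(3/2), 0, 1/2, 0] := by
  rw [show mu * (alphaC ^ 2 / 5) = ((-(3/2):ℚ):ℂ) + ((0:ℚ):ℂ)*(s3*s5) + ((1/2:ℚ):ℂ)*(Complex.I*s3)
      + ((0:ℚ):ℂ)*(Complex.I*s5) by rw [c_mu2]; push_cast; ring]
  exact Phi_combo _ _ _ _

lemma Phi_mu3 : Phi (mu * (alphaC ^ 3 / 5)) = ![0, -1, 0, 0] := by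
  rw [show mu * (alphaC ^ 3 / 5) = ((0:ℚ):ℂ) + ((-1:ℚ):ℂ)*(s3*s5) + ((0:ℚ):ℂ)*(Complex.I*s3)
      + ((0:ℚ):ℂ)*(Complex.I*s5) by rw [c_mu3]; push_cast; ring]
  exact Phi_combo _ _ _ _

/-! ### Values of the functionals -/

lemma G1_one : G1 1 = 0 := by rw [G1_apply, Phi_one, show (![1, 0, 0, 0] : Fin 4 → ℚ) 3 = 0 from rfl]; norm_num
lemma G1_xi : G1 xi = 0 := by rw [G1_apply, Phi_xi, show (![1/2, 0, 1/2, 0] : Fin 4 → ℚ) 3 = 0 from rfl]; norm_num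
lemma G1_lam : G1 lam = 3 := by rw [G1_apply, Phi_lam, show (![4, 1, 0, 0] : Fin 4 → ℚ) 3 = 0 from rfl]; norm_num
lemma G1_lamxi : G1 (lam * xi) = 3 := by rw [G1_apply, Phi_lamxi, show (![2, 1/2, 2, 3/2] : Fin 4 → ℚ) 3 = 3/2 from rfl]; norm_num
lemma G1_alpha : G1 alphaC = 2 := by rw [G1_apply, Phi_alpha, show (![0, 1/2, 0, 1/2] : Fin 4 → ℚ) 3 = 1/2 from rfl]; norm_num
lemma G1_alpha2 : G1 (alphaC ^ 2 / 5) = 0 := by rw [G1_apply, Phi_alpha2, show (![1/2, 0, 1/2, 0] : Fin 4 → ℚ) 3 = 0 from rfl]; norm_num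
lemma G1_alpha3 : G1 (alphaC ^ 3 / 5) = 1 := by rw [G1_apply, Phi_alpha3, show (![0, 0, 0, 1] : Fin 4 → ℚ) 3 = 1 from rfl]; norm_num

lemma G2_one : G2 1 = 2 := by rw [G2_apply, Phi_one]; norm_num
lemma G2_xi : G2 xi = 1 := by rw [G2_apply, Phi_xi]; norm_num
lemma G2_lam : G2 lam = 8 := by rw [G2_apply, Phi_lam]; norm_num
lemma G2_lamxi : G2 (lam * xi) = 4 := by rw [G2_apply, Phi_lamxi]; norm_num
lemma G2_mu1 : G2 (mu * 1) = 0 := by rw [G2_apply, Phi_mu1]; norm_num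
lemma G2_mualpha : G2 (mu * alphaC) = 0 := by rw [G2_apply, Phi_mualpha]; norm_num
lemma G2_mu2 : G2 (mu * (alphaC ^ 2 / 5)) = -3 := by rw [G2_apply, Phi_mu2]; norm_num
lemma G2_mu3 : G2 (mu * (alphaC ^ 3 / 5)) = 0 := by rw [G2_apply, Phi_mu3]; norm_num

/-! ### Index machinery -/

noncomputable def pi3 : ℚ →+ ℚ ⧸ AddSubgroup.zmultiples (3:ℚ) :=
  QuotientAddGroup.mk' _

lemma pi3_zero_iff (q : ℚ) : pi3 q = 0 ↔ q ∈ zmultiples (3:ℚ) :=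
  QuotientAddGroup.eq_zero_iff q

lemma pi3_one_ne : pi3 1 ≠ 0 := by
  rw [Ne, pi3_zero_iff, mem_zmultiples_iff]
  rintro ⟨k, hk⟩
  rw [zsmul_eq_mul] at hk
  have h1 : ((3 * k : ℤ) : ℚ) = 1 := by push_cast; linarith
  have : (3 * k : ℤ) = 1 := by exact_mod_cast h1
  omega

lemma pi3_order : addOrderOf (pi3 1) = 3 := by
  have : Fact (Nat.Prime 3) := ⟨by norm_num⟩
  refine addOrderOf_eq_prime ?_ pi3_one_ne
  rw [← map_nsmul, pi3_zero_iff]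
  exact mem_zmultiples_iff.mpr ⟨1, by norm_num⟩

lemma pi3_int (n : ℤ) : pi3 (n:ℚ) ∈ zmultiples (pi3 1) :=
  mem_zmultiples_iff.mpr ⟨n, by rw [← map_zsmul]; norm_num⟩

lemma index_eq_three {H K : AddSubgroup ℂ} (G : ℂ →+ ℚ) (c : ℂ)
    (hcK : c ∈ K) (hGc : G c = 1)
    (hGH : ∀ z ∈ H, G z ∈ zmultiples (3:ℚ))
    (h3c : (3:ℤ) • c ∈ H)
    (hcov : K ≤ H ⊔ zmultiples c)
    (hrange : ∀ z ∈ K, pi3 (G z) ∈ zmultiples (pi3 1)) :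
    (H.addSubgroupOf K).index = 3 := by
  set f : K →+ ℚ ⧸ zmultiples (3:ℚ) := (pi3.comp G).comp K.subtype with hf
  have hfz : ∀ z : K, f z = pi3 (G (z:ℂ)) := fun z => rfl
  have hker : f.ker = H.addSubgroupOf K := by
    ext z
    rw [AddMonoidHom.mem_ker, AddSubgroup.mem_addSubgroupOf, hfz, pi3_zero_iff]
    constructor
    · intro hz
      obtain ⟨o, ho, b, hb, hob⟩ := AddSubgroup.mem_sup.mp (hcov z.2)
      obtain ⟨m, rfl⟩ := mem_zmultiples_iff.mp hb
      obtain ⟨k, hk⟩ := mem_zmultiples_iff.mp (hGH o ho)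
      obtain ⟨n, hn⟩ := mem_zmultiples_iff.mp hz
      have hGz : G (z:ℂ) = (k:ℚ) * 3 + (m:ℚ) := by
        rw [← hob, map_add, map_zsmul, hGc, ← hk]
        push_cast [zsmul_eq_mul]
        ring
      have hnq : (n:ℚ) * 3 = (k:ℚ) * 3 + (m:ℚ) := by
        rw [← hGz, ← hn, zsmul_eq_mul]
      have hm' : m = 3 * (n - k) := by
        have : (m:ℚ) = ((3 * (n - k) : ℤ) : ℚ) := by push_cast; linarith
        exact_mod_cast this
      have hz2 : (z:ℂ) = o + (n - k) • ((3:ℤ) • c) := by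
        rw [← hob, hm']
        congr 1
        rw [smul_smul, mul_comm]
      rw [hz2]
      exact add_mem ho (AddSubgroup.zsmul_mem _ h3c _)
    · intro hz
      exact hGH _ hz
  have hrange_eq : f.range = zmultiples (pi3 1) := by
    apply le_antisymm
    · rintro q ⟨z, rfl⟩
      exact hrange z z.2
    · rw [zmultiples_le]
      exact ⟨⟨c, hcK⟩, by rw [hfz, hGc]⟩
  rw [← hker, AddSubgroup.index_ker, hrange_eq, Nat.card_zmultiples, pi3_order]


/-! ### Combination identities -/

lemma exi : xi = alphaC ^ 2 / 5 := c_xi.trans c_alpha2.symm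

lemma L1 : lam = (4:ℤ) • (1:ℂ) + (2:ℤ) • alphaC + (-1:ℤ) • (alphaC ^ 3 / 5) := by
  simp only [zsmul_eq_mul]
  rw [c_alpha3, c_alpha, c_lam]; push_cast; ring

lemma L2 : lam * xi = alphaC + (4:ℤ) • (alphaC ^ 2 / 5) + alphaC ^ 3 / 5 := by
  simp only [zsmul_eq_mul]
  rw [c_lamxi, c_alpha3, c_alpha2, c_alpha]; push_cast; ring

lemma J1 : mu * 1 = (2:ℤ) • xi + (-1:ℤ) • (1:ℂ) := by
  simp only [zsmul_eq_mul]
  rw [c_mu1, c_xi]; push_cast; ring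

lemma J2 : mu * alphaC = (4:ℤ) • (1:ℂ) + (-4:ℤ) • xi + (-1:ℤ) • lam + lam * xi := by
  simp only [zsmul_eq_mul]
  rw [c_mualpha, c_lamxi, c_lam, c_xi]; push_cast; ring

lemma J3 : mu * (alphaC ^ 2 / 5) = xi + (-2:ℤ) • (1:ℂ) := by
  simp only [zsmul_eq_mul]
  rw [c_mu2, c_xi]; push_cast; ring

lemma J4 : mu * (alphaC ^ 3 / 5) = (4:ℤ) • (1:ℂ) + (-1:ℤ) • lam := by
  simp only [zsmul_eq_mul]
  rw [c_mu3, c_lam]; push_cast; ring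

lemma K2 : alphaC = (lam * xi + (-4:ℤ) • xi) + (-1:ℤ) • (alphaC ^ 3 / 5) := by
  simp only [zsmul_eq_mul]
  rw [c_lamxi, c_alpha3, c_alpha, c_xi]; push_cast; ring

lemma T1 : (3:ℤ) • (alphaC ^ 3 / 5)
    = (4:ℤ) • (1:ℂ) + (-8:ℤ) • xi + (-1:ℤ) • lam + (2:ℤ) • (lam * xi) := by
  simp only [zsmul_eq_mul]
  rw [c_lamxi, c_alpha3, c_lam, c_xi]; push_cast; ring

lemma M2 : lam = (-2:ℤ) • (mu * (alphaC ^ 2 / 5)) + (-1:ℤ) • (mu * (alphaC ^ 3 / 5))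
    + (2:ℤ) • xi := by
  simp only [zsmul_eq_mul]
  rw [c_mu2, c_mu3, c_lam, c_xi]; push_cast; ring

lemma M1 : (1:ℂ) = (-1:ℤ) • (mu * 1) + (2:ℤ) • xi := by
  simp only [zsmul_eq_mul]
  rw [c_mu1, c_xi]; push_cast; ring

lemma M3 : lam * xi = (2:ℤ) • (mu * 1) + mu * alphaC + (-1:ℤ) • (mu * (alphaC ^ 2 / 5))
    + (-1:ℤ) • (mu * (alphaC ^ 3 / 5)) + xi := by
  simp only [zsmul_eq_mul]
  rw [c_lamxi, c_mu1, c_mualpha, c_mu2, c_mu3, c_xi]; push_cast; ring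

lemma T2 : (3:ℤ) • xi = (2:ℤ) • (mu * 1) + (-1:ℤ) • (mu * (alphaC ^ 2 / 5)) := by
  simp only [zsmul_eq_mul]
  rw [c_xi, c_mu1, c_mu2]; push_cast; ring

/-! ### Memberships -/

lemma one_mem_O : (1:ℂ) ∈ OAdd := by
  show (1:ℂ) ∈ AddSubgroup.closure {1, xi, lam, lam * xi}
  exact subset_closure (Set.mem_insert _ _)

lemma xi_mem_O : xi ∈ OAdd := by
  show xi ∈ AddSubgroup.closure {1, xi, lam, lam * xi}
  exact subset_closure (Set.mem_insert_of_mem _ (Set.mem_insert _ _))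

lemma lam_mem_O : lam ∈ OAdd := by
  show lam ∈ AddSubgroup.closure {1, xi, lam, lam * xi}
  exact subset_closure (Set.mem_insert_of_mem _ (Set.mem_insert_of_mem _ (Set.mem_insert _ _)))

lemma lamxi_mem_O : lam * xi ∈ OAdd := by
  show lam * xi ∈ AddSubgroup.closure {1, xi, lam, lam * xi}
  exact subset_closure (Set.mem_insert_of_mem _ (Set.mem_insert_of_mem _ (Set.mem_insert_of_mem _ rfl)))

lemma one_mem_OK : (1:ℂ) ∈ OKAdd := by
  show (1:ℂ) ∈ AddSubgroup.closure {1, alphaC, alphaC ^ 2 / 5, alphaC ^ 3 / 5}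
  exact subset_closure (Set.mem_insert _ _)

lemma alpha_mem_OK : alphaC ∈ OKAdd := by
  show alphaC ∈ AddSubgroup.closure {1, alphaC, alphaC ^ 2 / 5, alphaC ^ 3 / 5}
  exact subset_closure (Set.mem_insert_of_mem _ (Set.mem_insert _ _))

lemma alpha2_mem_OK : alphaC ^ 2 / 5 ∈ OKAdd := by
  show alphaC ^ 2 / 5 ∈ AddSubgroup.closure {1, alphaC, alphaC ^ 2 / 5, alphaC ^ 3 / 5}
  exact subset_closure (Set.mem_insert_of_mem _ (Set.mem_insert_of_mem _ (Set.mem_insert _ _)))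

lemma alpha3_mem_OK : alphaC ^ 3 / 5 ∈ OKAdd := by
  show alphaC ^ 3 / 5 ∈ AddSubgroup.closure {1, alphaC, alphaC ^ 2 / 5, alphaC ^ 3 / 5}
  exact subset_closure (Set.mem_insert_of_mem _ (Set.mem_insert_of_mem _ (Set.mem_insert_of_mem _ rfl)))

lemma JAdd_eq : JAdd
    = AddSubgroup.closure {mu * 1, mu * alphaC, mu * (alphaC ^ 2 / 5), mu * (alphaC ^ 3 / 5)} := by
  show (AddSubgroup.closure {1, alphaC, alphaC ^ 2 / 5, alphaC ^ 3 / 5}).map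
      (AddMonoidHom.mulLeft (Complex.I * (Real.sqrt 3 : ℂ))) = _
  rw [AddMonoidHom.map_closure]
  congr 1
  rw [Set.image_insert_eq, Set.image_insert_eq, Set.image_insert_eq, Set.image_singleton]
  rfl

lemma j1_mem_J : mu * 1 ∈ JAdd := by
  rw [JAdd_eq]; exact subset_closure (Set.mem_insert _ _)
lemma j2_mem_J : mu * alphaC ∈ JAdd := by
  rw [JAdd_eq]; exact subset_closure (Set.mem_insert_of_mem _ (Set.mem_insert _ _))
lemma j3_mem_J : mu * (alphaC ^ 2 / 5) ∈ JAdd := by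
  rw [JAdd_eq]; exact subset_closure (Set.mem_insert_of_mem _ (Set.mem_insert_of_mem _ (Set.mem_insert _ _)))
lemma j4_mem_J : mu * (alphaC ^ 3 / 5) ∈ JAdd := by
  rw [JAdd_eq]; exact subset_closure (Set.mem_insert_of_mem _ (Set.mem_insert_of_mem _ (Set.mem_insert_of_mem _ rfl)))

/-! ### The two inclusions -/

lemma J_le_O : JAdd ≤ OAdd := by
  rw [JAdd_eq]
  refine AddSubgroup.closure_le _ |>.mpr ?_
  rintro x hx
  simp only [Set.mem_insert_iff, Set.mem_singleton_iff] at hx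
  rcases hx with rfl | rfl | rfl | rfl
  · rw [J1]
    exact add_mem (AddSubgroup.zsmul_mem _ xi_mem_O _) (AddSubgroup.zsmul_mem _ one_mem_O _)
  · rw [J2]
    exact add_mem (add_mem (add_mem (AddSubgroup.zsmul_mem _ one_mem_O _)
      (AddSubgroup.zsmul_mem _ xi_mem_O _)) (AddSubgroup.zsmul_mem _ lam_mem_O _)) lamxi_mem_O
  · rw [J3]
    exact add_mem xi_mem_O (AddSubgroup.zsmul_mem _ one_mem_O _)
  · rw [J4]
    exact add_mem (AddSubgroup.zsmul_mem _ one_mem_O _) (AddSubgroup.zsmul_mem _ lam_mem_O _)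

lemma O_le_OK : OAdd ≤ OKAdd := by
  show AddSubgroup.closure {1, xi, lam, lam * xi} ≤ OKAdd
  refine AddSubgroup.closure_le _ |>.mpr ?_
  rintro x hx
  simp only [Set.mem_insert_iff, Set.mem_singleton_iff] at hx
  rcases hx with rfl | rfl | rfl | rfl
  · exact one_mem_OK
  · rw [exi]; exact alpha2_mem_OK
  · rw [L1]
    exact add_mem (add_mem (AddSubgroup.zsmul_mem _ one_mem_OK _)
      (AddSubgroup.zsmul_mem _ alpha_mem_OK _)) (AddSubgroup.zsmul_mem _ alpha3_mem_OK _)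
  · rw [L2]
    exact add_mem (add_mem alpha_mem_OK (AddSubgroup.zsmul_mem _ alpha2_mem_OK _)) alpha3_mem_OK

/-! ### Hypotheses for the index computations -/

lemma GH1 : ∀ z ∈ OAdd, G1 z ∈ zmultiples (3:ℚ) := by
  have h : OAdd ≤ (zmultiples (3:ℚ)).comap G1 := by
    show AddSubgroup.closure {1, xi, lam, lam * xi} ≤ _
    refine AddSubgroup.closure_le _ |>.mpr ?_
    rintro x hx
    simp only [Set.mem_insert_iff, Set.mem_singleton_iff] at hx
    rcases hx with rfl | rfl | rfl | rfl
    · exact mem_comap.mpr (by rw [G1_one]; exact zero_mem _)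
    · exact mem_comap.mpr (by rw [G1_xi]; exact zero_mem _)
    · exact mem_comap.mpr (by rw [G1_lam]; exact mem_zmultiples _)
    · exact mem_comap.mpr (by rw [G1_lamxi]; exact mem_zmultiples _)
  exact fun z hz => mem_comap.mp (h hz)

lemma GH2 : ∀ z ∈ JAdd, G2 z ∈ zmultiples (3:ℚ) := by
  have h : JAdd ≤ (zmultiples (3:ℚ)).comap G2 := by
    rw [JAdd_eq]
    refine AddSubgroup.closure_le _ |>.mpr ?_
    rintro x hx
    simp only [Set.mem_insert_iff, Set.mem_singleton_iff] at hx
    rcases hx with rfl | rfl | rfl | rfl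
    · exact mem_comap.mpr (by rw [G2_mu1]; exact zero_mem _)
    · exact mem_comap.mpr (by rw [G2_mualpha]; exact zero_mem _)
    · exact mem_comap.mpr (by rw [G2_mu2]; exact mem_zmultiples_iff.mpr ⟨-1, by norm_num⟩)
    · exact mem_comap.mpr (by rw [G2_mu3]; exact zero_mem _)
  exact fun z hz => mem_comap.mp (h hz)

lemma h3c1 : (3:ℤ) • (alphaC ^ 3 / 5) ∈ OAdd := by
  rw [T1]
  exact add_mem (add_mem (add_mem (AddSubgroup.zsmul_mem _ one_mem_O _)
    (AddSubgroup.zsmul_mem _ xi_mem_O _)) (AddSubgroup.zsmul_mem _ lam_mem_O _))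
    (AddSubgroup.zsmul_mem _ lamxi_mem_O _)

lemma h3c2 : (3:ℤ) • xi ∈ JAdd := by
  rw [T2]
  exact add_mem (AddSubgroup.zsmul_mem _ j1_mem_J _) (AddSubgroup.zsmul_mem _ j3_mem_J _)

lemma cov1 : OKAdd ≤ OAdd ⊔ zmultiples (alphaC ^ 3 / 5) := by
  have hl : OAdd ≤ OAdd ⊔ zmultiples (alphaC ^ 3 / 5) := le_sup_left
  have hr : zmultiples (alphaC ^ 3 / 5) ≤ OAdd ⊔ zmultiples (alphaC ^ 3 / 5) := le_sup_right
  show AddSubgroup.closure {1, alphaC, alphaC ^ 2 / 5, alphaC ^ 3 / 5} ≤ _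
  refine AddSubgroup.closure_le _ |>.mpr ?_
  rintro x hx
  simp only [Set.mem_insert_iff, Set.mem_singleton_iff] at hx
  rcases hx with rfl | rfl | rfl | rfl
  · exact hl one_mem_O
  · nth_rewrite 2 [K2]
    exact add_mem (hl (add_mem lamxi_mem_O (AddSubgroup.zsmul_mem _ xi_mem_O _)))
      (hr (AddSubgroup.zsmul_mem _ (mem_zmultiples _) _))
  · rw [← exi]; exact hl xi_mem_O
  · exact hr (mem_zmultiples _)

lemma cov2 : OAdd ≤ JAdd ⊔ zmultiples xi := by
  have hl : JAdd ≤ JAdd ⊔ zmultiples xi := le_sup_left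
  have hr : zmultiples xi ≤ JAdd ⊔ zmultiples xi := le_sup_right
  show AddSubgroup.closure {1, xi, lam, lam * xi} ≤ _
  refine AddSubgroup.closure_le _ |>.mpr ?_
  rintro x hx
  simp only [Set.mem_insert_iff, Set.mem_singleton_iff] at hx
  rcases hx with rfl | rfl | rfl | rfl
  · rw [M1]
    exact add_mem (hl (AddSubgroup.zsmul_mem _ j1_mem_J _))
      (hr (AddSubgroup.zsmul_mem _ (mem_zmultiples _) _))
  · exact hr (mem_zmultiples _)
  · rw [M2]
    exact add_mem (add_mem (hl (AddSubgroup.zsmul_mem _ j3_mem_J _))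
      (hl (AddSubgroup.zsmul_mem _ j4_mem_J _))) (hr (AddSubgroup.zsmul_mem _ (mem_zmultiples _) _))
  · rw [M3]
    exact add_mem (add_mem (add_mem (add_mem (hl (AddSubgroup.zsmul_mem _ j1_mem_J _))
      (hl j2_mem_J)) (hl (AddSubgroup.zsmul_mem _ j3_mem_J _)))
      (hl (AddSubgroup.zsmul_mem _ j4_mem_J _))) (hr (mem_zmultiples _))

lemma range1 : ∀ z ∈ OKAdd, pi3 (G1 z) ∈ zmultiples (pi3 1) := by
  have h : OKAdd ≤ (zmultiples (pi3 1)).comap (pi3.comp G1) := by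
    show AddSubgroup.closure {1, alphaC, alphaC ^ 2 / 5, alphaC ^ 3 / 5} ≤ _
    refine AddSubgroup.closure_le _ |>.mpr ?_
    rintro x hx
    simp only [Set.mem_insert_iff, Set.mem_singleton_iff] at hx
    rcases hx with rfl | rfl | rfl | rfl
    · refine mem_comap.mpr ?_
      show pi3 (G1 1) ∈ _
      rw [G1_one, map_zero]; exact zero_mem _
    · refine mem_comap.mpr ?_
      show pi3 (G1 alphaC) ∈ _
      rw [G1_alpha]; simpa using pi3_int 2
    · refine mem_comap.mpr ?_
      show pi3 (G1 (alphaC ^ 2 / 5)) ∈ _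
      rw [G1_alpha2, map_zero]; exact zero_mem _
    · refine mem_comap.mpr ?_
      show pi3 (G1 (alphaC ^ 3 / 5)) ∈ _
      rw [G1_alpha3]; exact mem_zmultiples _
  exact fun z hz => mem_comap.mp (h hz)

lemma range2 : ∀ z ∈ OAdd, pi3 (G2 z) ∈ zmultiples (pi3 1) := by
  have h : OAdd ≤ (zmultiples (pi3 1)).comap (pi3.comp G2) := by
    show AddSubgroup.closure {1, xi, lam, lam * xi} ≤ _
    refine AddSubgroup.closure_le _ |>.mpr ?_
    rintro x hx
    simp only [Set.mem_insert_iff, Set.mem_singleton_iff] at hx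
    rcases hx with rfl | rfl | rfl | rfl
    · refine mem_comap.mpr ?_
      show pi3 (G2 1) ∈ _
      rw [G2_one]; simpa using pi3_int 2
    · refine mem_comap.mpr ?_
      show pi3 (G2 xi) ∈ _
      rw [G2_xi]; exact mem_zmultiples _
    · refine mem_comap.mpr ?_
      show pi3 (G2 lam) ∈ _
      rw [G2_lam]; simpa using pi3_int 8
    · refine mem_comap.mpr ?_
      show pi3 (G2 (lam * xi)) ∈ _
      rw [G2_lamxi]; simpa using pi3_int 4
  exact fun z hz => mem_comap.mp (h hz)

end ChainAux

open ChainAux in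
/-- i√3 · O_K ⊆ O ⊆ O_K, with each inclusion of index 3. -/
theorem chain_index_three :
    JAdd ≤ OAdd ∧ OAdd ≤ OKAdd ∧
    (JAdd.addSubgroupOf OAdd).index = 3 ∧
    (OAdd.addSubgroupOf OKAdd).index = 3 := by
  refine ⟨J_le_O, O_le_OK, ?_, ?_⟩
  · exact index_eq_three G2 xi xi_mem_O G2_xi GH2 h3c2 cov2 range2
  · exact index_eq_three G1 (alphaC ^ 3 / 5) alpha3_mem_OK G1_alpha3 GH1 h3c1 cov1 range1
end

section
/- The element λξ = (4 + √15)·e^{2πi/6} is a unit of the ring O = ℤ[ξ, λ] of infinite multiplicative order, and ξ is a unit of order 6; the subgroup of units generated by ξ and λξ is isomorphic to C₆ × ℤ. -/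
/-- The ring O = ℤ[ξ, λ] as a subring of ℂ. -/
noncomputable def OR : Subring ℂ := Subring.closure {xi, lam}

/-- A commutative group with a commuting pair of elements, one of order 6 and one
"independent", generates a subgroup isomorphic to C₆ × ℤ. -/
noncomputable def key_iso {G : Type*} [CommGroup G] (u v : G) (hv : orderOf v = 6)
    (h : ∀ (a : ℕ) (n : ℤ), v ^ a * u ^ n = 1 → n = 0) :
    (Subgroup.closure {u, v} : Subgroup G) ≃* Multiplicative (ZMod 6 × ℤ) := by
  have hv6 : v ^ (6 : ℕ) = 1 := by rw [← hv]; exact pow_orderOf_eq_one v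
  let f : Multiplicative (ZMod 6 × ℤ) →* G :=
  { toFun := fun x => v ^ (x.toAdd.1.val) * u ^ x.toAdd.2
    map_one' := by simp
    map_mul' := by
      intro x y
      simp only [toAdd_mul, Prod.fst_add, Prod.snd_add]
      have hkey : ∀ a b : ZMod 6, v ^ (a + b).val = v ^ a.val * v ^ b.val := by
        intro a b
        rw [← pow_add, ZMod.val_add]
        conv_rhs => rw [← pow_mod_orderOf, hv]
      rw [hkey, zpow_add]
      exact mul_mul_mul_comm _ _ _ _ }
  have hinj : Function.Injective f := by
    refine (injective_iff_map_eq_one f).mpr ?_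
    intro x hx
    have hn : x.toAdd.2 = 0 := h _ _ hx
    have hva : v ^ (x.toAdd.1.val) = 1 := by
      have := hx
      simp only [f, MonoidHom.coe_mk, OneHom.coe_mk, hn, zpow_zero, mul_one] at this
      exact this
    have hdvd : 6 ∣ x.toAdd.1.val := by
      have := orderOf_dvd_of_pow_eq_one hva
      rwa [hv] at this
    have hlt : x.toAdd.1.val < 6 := ZMod.val_lt _
    have ha : x.toAdd.1 = 0 := (ZMod.val_eq_zero _).mp (Nat.eq_zero_of_dvd_of_lt hdvd hlt)
    have hxz : x.toAdd = 0 := Prod.ext ha hn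
    rw [← ofAdd_toAdd x, hxz, ofAdd_zero]
  have hrange : f.range = Subgroup.closure {u, v} := by
    apply le_antisymm
    · rintro w ⟨x, rfl⟩
      exact mul_mem
        (pow_mem (Subgroup.subset_closure (by simp)) _)
        (zpow_mem (Subgroup.subset_closure (by simp)) _)
    · rw [Subgroup.closure_le]
      intro w hw
      rcases hw with rfl | rfl
      · exact ⟨Multiplicative.ofAdd (0, 1), by simp [f]⟩
      · exact ⟨Multiplicative.ofAdd (1, 0), by
          simp [f, show ((1 : ZMod 6)).val = 1 from rfl]⟩
  exact (MulEquiv.subgroupCongr hrange.symm).trans (MonoidHom.ofInjective hinj).symm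

/-- λξ is a unit of O of infinite multiplicative order, ξ is a unit of order 6,
and the group of units they generate is isomorphic to C₆ × ℤ. -/
theorem units_of_O :
    ∃ u v : ORˣ, ((u : OR) : ℂ) = lam * xi ∧ ¬ IsOfFinOrder u ∧
      ((v : OR) : ℂ) = xi ∧ orderOf v = 6 ∧
      Nonempty ((Subgroup.closure {u, v} : Subgroup ORˣ) ≃*
        Multiplicative (ZMod 6 × ℤ)) := by
  have h3 : ((Real.sqrt 3 : ℝ) : ℂ) ^ 2 = 3 := by
    rw [← Complex.ofReal_pow, Real.sq_sqrt (by norm_num : (0:ℝ) ≤ 3)]; norm_num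
  have h15 : ((Real.sqrt 15 : ℝ) : ℂ) ^ 2 = 15 := by
    rw [← Complex.ofReal_pow, Real.sq_sqrt (by norm_num : (0:ℝ) ≤ 15)]; norm_num
  have hxi2 : xi ^ 2 = xi - 1 := by
    unfold xi
    linear_combination (((Real.sqrt 3 : ℝ) : ℂ) ^ 2 / 4) * Complex.I_sq + (-1/4 : ℂ) * h3
  have hxi3 : xi ^ 3 = -1 := by linear_combination (xi + 1) * hxi2
  have hxi6 : xi ^ 6 = 1 := by linear_combination (xi ^ 3 - 1) * hxi3
  have hlameq : lam * (8 - lam) = 1 := by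
    unfold lam; linear_combination -h15
  -- xi is never a real number
  have hxim : xi.im = Real.sqrt 3 / 2 := by
    have : xi = ((1/2 : ℝ) : ℂ) + ((Real.sqrt 3 / 2 : ℝ) : ℂ) * Complex.I := by
      unfold xi; push_cast; ring
    rw [this]; simp
  have hxine : ∀ r : ℝ, xi ≠ (r : ℂ) := by
    intro r hr
    have him := congrArg Complex.im hr
    rw [hxim] at him
    simp only [Complex.ofReal_im] at him
    have : Real.sqrt 3 = 0 := by linarith
    have h3pos : (0:ℝ) < Real.sqrt 3 := Real.sqrt_pos.mpr (by norm_num)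
    linarith
  -- membership
  have hx : xi ∈ OR := Subring.subset_closure (by simp)
  have hl : lam ∈ OR := Subring.subset_closure (by simp)
  set X : OR := ⟨xi, hx⟩ with hXdef
  set L : OR := ⟨lam, hl⟩ with hLdef
  have hX6 : X ^ 6 = 1 := by
    apply Subtype.ext; push_cast; exact hxi6
  have hL : L * (8 - L) = 1 := by
    apply Subtype.ext; push_cast; exact hlameq
  -- units
  have hu1 : L * X * ((8 - L) * X ^ 5) = 1 := by
    calc L * X * ((8 - L) * X ^ 5) = (L * (8 - L)) * X ^ 6 := by ring
    _ = 1 := by rw [hL, hX6, one_mul]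
  have hu2 : (8 - L) * X ^ 5 * (L * X) = 1 := by
    calc (8 - L) * X ^ 5 * (L * X) = (L * (8 - L)) * X ^ 6 := by ring
    _ = 1 := by rw [hL, hX6, one_mul]
  have hw1 : X * X ^ 5 = 1 := by
    calc X * X ^ 5 = X ^ 6 := by ring
    _ = 1 := hX6
  have hw2 : X ^ 5 * X = 1 := by
    calc X ^ 5 * X = X ^ 6 := by ring
    _ = 1 := hX6
  refine ⟨⟨L * X, (8 - L) * X ^ 5, hu1, hu2⟩, ⟨X, X ^ 5, hw1, hw2⟩, ?_, ?_, ?_, ?_, ?_⟩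
  · push_cast; ring
  all_goals {
    set u : ORˣ := ⟨L * X, (8 - L) * X ^ 5, hu1, hu2⟩ with hudef
    set v : ORˣ := ⟨X, X ^ 5, hw1, hw2⟩ with hvdef
    -- coercion to ℂ of unit equations
    have hcoe : ∀ (a : ℕ) (n : ℤ), v ^ a * u ^ n = 1 →
        xi ^ a * (lam * xi) ^ n = 1 := by
      intro a n hh
      have h1 := congrArg (Units.map (Subring.subtype OR).toMonoidHom) hh
      rw [map_mul, map_pow, map_zpow, map_one] at h1
      have h2 := congrArg Units.val h1
      rw [Units.val_mul, Units.val_pow_eq_pow_val, Units.val_zpow_eq_zpow_val] at h2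
      simpa [hudef, hvdef, hXdef, hLdef] using h2
    -- the key independence fact
    have habs : ∀ (a : ℕ) (n : ℤ), v ^ a * u ^ n = 1 → n = 0 := by
      intro a n hh
      have hc := hcoe a n hh
      have habsxi : ‖xi‖ = 1 := by
        have hsq : Complex.normSq xi = 1 := by
          have : (Complex.normSq xi : ℂ) = 1 := by
            rw [← Complex.mul_conj]
            unfold xi
            simp only [map_div₀, map_add, map_one, map_mul, Complex.conj_I,
              Complex.conj_ofReal, map_ofNat]
            linear_combination (-(((Real.sqrt 3 : ℝ) : ℂ) ^ 2) / 4) * Complex.I_sq +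
              (1/4 : ℂ) * h3
          exact_mod_cast this
        rw [Complex.norm_def, hsq, Real.sqrt_one]
      have hlamr : lam = (((4 + Real.sqrt 15 : ℝ)) : ℂ) := by unfold lam; push_cast; ring
      have habslam : ‖lam‖ = 4 + Real.sqrt 15 := by
        rw [hlamr, Complex.norm_real, Real.norm_eq_abs, abs_of_pos]
        have := Real.sqrt_nonneg 15; linarith
      have hca := congrArg (fun z : ℂ => ‖z‖) hc
      simp only [norm_mul, norm_pow, norm_zpow] at hca
      rw [habsxi, habslam, one_pow, one_mul,
        mul_one, norm_one] at hca
      have hgt : (1:ℝ) < 4 + Real.sqrt 15 := by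
        have := Real.sqrt_nonneg 15; linarith
      have := zpow_right_injective₀ (by linarith : (0:ℝ) < 4 + Real.sqrt 15)
        (by linarith : (4 + Real.sqrt 15 : ℝ) ≠ 1) (by rw [hca, zpow_zero] :
          (4 + Real.sqrt 15 : ℝ) ^ n = (4 + Real.sqrt 15 : ℝ) ^ (0:ℤ))
      exact this
    -- order of v is 6
    have hvpow : ∀ m : ℕ, v ^ m = 1 → xi ^ m = 1 := by
      intro m hm
      have h1 := congrArg (fun w : ORˣ => ((w : OR) : ℂ)) hm
      simpa [hvdef, hXdef] using h1
    have hv6 : v ^ 6 = 1 := by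
      apply Units.ext; apply Subtype.ext
      show ((X : OR) : ℂ) ^ 6 = 1
      simpa using hxi6
    have hvorder : orderOf v = 6 := by
      rw [orderOf_eq_iff (by norm_num)]
      refine ⟨hv6, ?_⟩
      intro m hm hm0 hcon
      have hxm := hvpow m hcon
      interval_cases m
      · exact hxine 1 (by simpa using hxm)
      · exact hxine 2 (by push_cast; linear_combination hxm - hxi2)
      · have : (-1 : ℂ) = 1 := by rw [← hxi3]; exact hxm
        norm_num at this
      · exact hxine (-1) (by push_cast; linear_combination -hxm + xi * hxi3)
      · exact hxine 0 (by push_cast; linear_combination -hxm + xi ^ 2 * hxi3 - hxi2)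
    first
    | exact (by
        intro hfin
        obtain ⟨n, hn0, hn1⟩ := isOfFinOrder_iff_pow_eq_one.mp hfin
        have : ((n : ℤ)) = 0 := habs 0 n (by simpa [zpow_natCast] using hn1)
        omega)
    | exact rfl
    | exact hvorder
    | exact ⟨key_iso u v hvorder habs⟩
  }
end

section
/- The ℤ-module L ⊂ ℂ spanned by g₁ = −1 − ξ + λ − 2λξ, g₂ = ξ·g₁, g₃ = −2 + ξ + 2λ + 2λξ, and g₄ = −2 − 2ξ − λ + 2λξ satisfies O·L ⊆ L, i.e., L is an ideal of the ring O = ℤ[ξ, λ]. -/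
noncomputable def Ospan : Submodule ℤ ℂ :=
  Submodule.span ℤ {1, xi, lam, lam * xi}
noncomputable def g1 : ℂ := -1 - xi + lam - 2 * (lam * xi)
noncomputable def g2 : ℂ := xi * g1
noncomputable def g3 : ℂ := -2 + xi + 2 * lam + 2 * (lam * xi)
noncomputable def g4 : ℂ := -2 - 2 * xi - lam + 2 * (lam * xi)
/-- The return module L = ⟨g₁, g₂, g₃, g₄⟩_ℤ. -/
noncomputable def Lspan : Submodule ℤ ℂ :=
  Submodule.span ℤ {g1, g2, g3, g4}

lemma hxi : xi * xi = xi - 1 := by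
  have h3 : ((Real.sqrt 3 : ℝ) : ℂ) ^ 2 = 3 := by
    rw [← Complex.ofReal_pow, Real.sq_sqrt (by norm_num : (0:ℝ) ≤ 3)]; norm_num
  unfold xi
  linear_combination (-1/4 : ℂ) * h3 + (((Real.sqrt 3 : ℝ) : ℂ)^2/4) * Complex.I_sq

lemma hlam : lam * lam = 8 * lam - 1 := by
  have h15 : ((Real.sqrt 15 : ℝ) : ℂ) ^ 2 = 15 := by
    rw [← Complex.ofReal_pow, Real.sq_sqrt (by norm_num : (0:ℝ) ≤ 15)]; norm_num
  unfold lam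
  linear_combination h15

lemma memL (x : ℂ) (c1 c2 c3 c4 : ℤ)
    (h : x = c1 * g1 + c2 * g2 + c3 * g3 + c4 * g4) : x ∈ Lspan := by
  have h1 : g1 ∈ Lspan := Submodule.subset_span (by simp)
  have h2 : g2 ∈ Lspan := Submodule.subset_span (by simp)
  have h3 : g3 ∈ Lspan := Submodule.subset_span (by simp)
  have h4 : g4 ∈ Lspan := Submodule.subset_span (by simp)
  rw [h]
  refine add_mem (add_mem (add_mem ?_ ?_) ?_) ?_ <;>
    simp only [← zsmul_eq_mul] <;> exact Submodule.smul_mem _ _ ‹_›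

lemma gen_mul_gen : ∀ x ∈ ({1, xi, lam, lam * xi} : Set ℂ),
    ∀ y ∈ ({g1, g2, g3, g4} : Set ℂ), x * y ∈ Lspan := by
  intro x hx y hy
  simp only [Set.mem_insert_iff, Set.mem_singleton_iff] at hx hy
  rcases hx with rfl | rfl | rfl | rfl <;> rcases hy with rfl | rfl | rfl | rfl
  · exact memL _ 1 0 0 0 (by push_cast; ring)
  · exact memL _ 0 1 0 0 (by push_cast; ring)
  · exact memL _ 0 0 1 0 (by push_cast; ring)
  · exact memL _ 0 0 0 1 (by push_cast; ring)
  · exact memL _ 0 1 0 0 (by push_cast; simp only [g1, g2, g3, g4]; ring)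
  · exact memL _ (-1) 1 0 0 (by push_cast; simp only [g1, g2, g3, g4]; linear_combination (-1 + lam - xi - 2*xi*lam) * hxi)
  · exact memL _ (-1) 0 0 1 (by push_cast; simp only [g1, g2, g3, g4]; linear_combination (1 + 2*lam) * hxi)
  · exact memL _ (-1) 1 (-1) 1 (by push_cast; simp only [g1, g2, g3, g4]; linear_combination (-1 + 4*lam) * hxi)
  · exact memL _ 6 (-1) 0 (-3) (by push_cast; simp only [g1, g2, g3, g4]; linear_combination (-1 - 2*lam) * hxi + (1 - 2*xi) * hlam)
  · exact memL _ 4 2 3 (-3) (by push_cast; simp only [g1, g2, g3, g4]; linear_combination (2 + 3*lam - 2*lam^2) * hxi + (2 - xi) * hlam)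
  · exact memL _ (-5) 5 5 1 (by push_cast; simp only [g1, g2, g3, g4]; linear_combination (5 + 10*lam) * hxi + (2 + 2*xi) * hlam)
  · exact memL _ (-5) 0 (-1) 3 (by push_cast; simp only [g1, g2, g3, g4]; linear_combination (-1 + 2*xi) * hlam)
  · exact memL _ 4 2 3 (-3) (by push_cast; simp only [g1, g2, g3, g4]; linear_combination (2 + 3*lam - 2*lam^2) * hxi + (2 - xi) * hlam)
  · exact memL _ (-2) 3 3 0 (by push_cast; simp only [g1, g2, g3, g4]; linear_combination (3 + 4*lam - lam^2 - xi*lam - 2*xi*lam^2) * hxi + (1 + xi) * hlam)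
  · exact memL _ (-11) 1 (-1) 6 (by push_cast; simp only [g1, g2, g3, g4]; linear_combination (1 + 3*lam + 2*lam^2) * hxi + (-2 + 4*xi) * hlam)
  · exact memL _ (-2) (-2) (-3) 2 (by push_cast; simp only [g1, g2, g3, g4]; linear_combination (-2 - 6*lam + 2*lam^2) * hxi + (-2 + xi) * hlam)

/-- O·L ⊆ L, i.e. L is an ideal of the ring O = ℤ[ξ, λ]. -/
theorem L_is_ideal :
    ∀ x ∈ Ospan, ∀ y ∈ Lspan, x * y ∈ Lspan := by
  intro x hx
  induction hx using Submodule.span_induction with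
  | mem o ho =>
    intro y hy
    induction hy using Submodule.span_induction with
    | mem g hg => exact gen_mul_gen o ho g hg
    | zero => simpa using Submodule.zero_mem Lspan
    | add a b _ _ pa pb => rw [mul_add]; exact add_mem pa pb
    | smul c a _ pa => rw [mul_smul_comm]; exact Submodule.smul_mem _ _ pa
  | zero => intro y hy; simpa using Submodule.zero_mem Lspan
  | add a b _ _ pa pb =>
    intro y hy; rw [add_mul]; exact add_mem (pa y hy) (pb y hy)
  | smul c a _ pa =>
    intro y hy; rw [smul_mul_assoc]; exact Submodule.smul_mem _ _ (pa y hy)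
end

section
/- The ideal L = ⟨g₁, ξg₁, g₃, g₄⟩_ℤ of O = ℤ[ξ, λ], with g₁ = −1 − ξ + λ − 2λξ, g₃ = −2 + ξ + 2λ + 2λξ, g₄ = −2 − 2ξ − λ + 2λξ, has index 81 in O as an additive subgroup. -/
/-- L = ⟨g₁, ξg₁, g₃, g₄⟩_ℤ as an additive subgroup of ℂ. -/
noncomputable def LAdd : AddSubgroup ℂ :=
  AddSubgroup.closure {g1, xi * g1, g3, g4}

namespace Aux

abbrev G := ℤ × ℤ × ℤ × ℤ

/-- the additive hom ℤ⁴ → ℂ sending (a,b,c,d) to a + bξ + cλ + dλξ. -/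
noncomputable def F : G →+ ℂ :=
  AddMonoidHom.mk' (fun x => (x.1 : ℂ) + (x.2.1 : ℂ) * xi + (x.2.2.1 : ℂ) * lam
      + (x.2.2.2 : ℂ) * (lam * xi)) (by
    intro x y
    simp only [Prod.fst_add, Prod.snd_add]
    push_cast
    ring)

def v1 : G := (-1, -1, 1, -2)
def v2 : G := (1, -2, 2, -1)
def v3 : G := (-2, 1, 2, 2)
def v4 : G := (-2, -2, -1, 2)

def L' : AddSubgroup G := AddSubgroup.closure {v1, v2, v3, v4}

lemma sqrt3_sq : (Real.sqrt 3 : ℂ) ^ 2 = 3 := by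
  rw [← Complex.ofReal_pow, Real.sq_sqrt (by norm_num : (3:ℝ) ≥ 0)]
  norm_num

lemma xi_sq : xi ^ 2 = xi - 1 := by
  unfold xi
  linear_combination ((Real.sqrt 3 : ℂ) ^ 2 / 4) * Complex.I_sq - (1/4 : ℂ) * sqrt3_sq

lemma F_v1 : F v1 = g1 := by
  simp only [F, v1, g1, AddMonoidHom.mk'_apply]
  push_cast; ring

lemma F_v2 : F v2 = xi * g1 := by
  simp only [F, v2, g1, AddMonoidHom.mk'_apply]
  push_cast
  linear_combination (1 + 2 * lam) * xi_sq

lemma F_v3 : F v3 = g3 := by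
  simp only [F, v3, g3, AddMonoidHom.mk'_apply]
  push_cast; ring

lemma F_v4 : F v4 = g4 := by
  simp only [F, v4, g4, AddMonoidHom.mk'_apply]
  push_cast; ring

lemma irr15 : Irrational (Real.sqrt 15) := by
  rw [show (15:ℝ) = ((15:ℕ):ℝ) by norm_num]
  rw [irrational_sqrt_natCast_iff]
  rintro ⟨r, hr⟩
  have h15 : r * r = 15 := hr.symm
  have hr4 : r ≤ 4 := by nlinarith
  interval_cases r <;> omega

lemma lam_entire (b d : ℤ) (h : (b : ℝ) + d * (4 + Real.sqrt 15) = 0) : b = 0 ∧ d = 0 := by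
  by_cases hd : d = 0
  · subst hd; simp at h; exact ⟨by exact_mod_cast h, rfl⟩
  · exfalso
    have : (d : ℝ) * Real.sqrt 15 = ((-(b + 4 * d) : ℤ) : ℝ) := by push_cast; linarith
    have h2 := irr15.intCast_mul hd
    rw [this] at h2
    exact Int.not_irrational _ h2

lemma F_injective : Function.Injective F := by
  rw [injective_iff_map_eq_zero]
  rintro ⟨a, b, c, d⟩ h
  simp only [F, AddMonoidHom.mk'_apply] at h
  set s := Real.sqrt 15 with hs
  set r := Real.sqrt 3 with hr
  have hx : (a:ℂ) + (b:ℂ) * xi + (c:ℂ) * lam + (d:ℂ) * (lam * xi)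
      = Complex.ofReal ((a : ℝ) + b/2 + c*(4+s) + d*(4+s)/2)
        + Complex.ofReal (((b : ℝ) + d*(4+s)) * (r/2)) * Complex.I := by
    unfold xi lam
    push_cast
    ring
  rw [hx] at h
  rw [Complex.ext_iff] at h
  simp only [Complex.add_re, Complex.add_im, Complex.mul_re, Complex.mul_im,
    Complex.ofReal_re, Complex.ofReal_im, Complex.I_re, Complex.I_im,
    Complex.zero_re, Complex.zero_im] at h
  obtain ⟨hA, hB⟩ := h
  have hr0 : r / 2 ≠ 0 := by rw [hr]; positivity
  have hB' : (b : ℝ) + d * (4 + s) = 0 := by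
    rcases mul_eq_zero.mp (by linarith : ((b : ℝ) + d*(4+s)) * (r/2) = 0) with h' | h'
    · exact h'
    · exact absurd h' hr0
  obtain ⟨hb, hd⟩ := lam_entire b d hB'
  subst hb; subst hd
  have hA' : (a : ℝ) + c * (4 + s) = 0 := by push_cast at hA; linarith
  obtain ⟨ha, hc⟩ := lam_entire a c hA'
  simp [ha, hc]

lemma range_F : F.range = OAdd := by
  apply le_antisymm
  · rintro x ⟨⟨a, b, c, d⟩, rfl⟩
    simp only [F, AddMonoidHom.mk'_apply]
    have mem1 : (1 : ℂ) ∈ OAdd := AddSubgroup.subset_closure (by simp)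
    have mem2 : xi ∈ OAdd := AddSubgroup.subset_closure (by simp)
    have mem3 : lam ∈ OAdd := AddSubgroup.subset_closure (by simp)
    have mem4 : lam * xi ∈ OAdd := AddSubgroup.subset_closure (by simp)
    have key : ∀ (k : ℤ) (z : ℂ), z ∈ OAdd → (k : ℂ) * z ∈ OAdd := by
      intro k z hz
      simpa [zsmul_eq_mul] using AddSubgroup.zsmul_mem OAdd hz k
    have h1 : (a : ℂ) ∈ OAdd := by simpa using key a 1 mem1
    exact AddSubgroup.add_mem _ (AddSubgroup.add_mem _ (AddSubgroup.add_mem _ h1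
      (key b _ mem2)) (key c _ mem3)) (key d _ mem4)
  · rw [OAdd, AddSubgroup.closure_le]
    rintro x hx
    simp only [Set.mem_insert_iff, Set.mem_singleton_iff] at hx
    rcases hx with rfl | rfl | rfl | rfl
    · exact ⟨(1, 0, 0, 0), by simp [F]⟩
    · exact ⟨(0, 1, 0, 0), by simp [F]⟩
    · exact ⟨(0, 0, 1, 0), by simp [F]⟩
    · exact ⟨(0, 0, 0, 1), by simp [F]⟩

lemma map_L' : L'.map F = LAdd := by
  rw [L', AddMonoidHom.map_closure, LAdd]
  congr 1
  simp only [Set.image_insert_eq, Set.image_singleton, F_v1, F_v2, F_v3, F_v4]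

/-- the quotient detector map -/
def phi : G →+ (ZMod 3 × ZMod 3 × ZMod 9) :=
  AddMonoidHom.mk' (fun x => (((x.1 - x.2.1 : ℤ) : ZMod 3),
      ((x.2.1 + x.2.2.1 : ℤ) : ZMod 3),
      ((-x.1 - 2 * x.2.1 - x.2.2.1 + x.2.2.2 : ℤ) : ZMod 9))) (by
    intro x y
    simp only [Prod.fst_add, Prod.snd_add, Prod.mk_add_mk, Prod.mk.injEq]
    refine ⟨?_, ?_, ?_⟩ <;> · push_cast; ring)

lemma ker_phi : phi.ker = L' := by
  apply le_antisymm
  · rintro ⟨a, b, c, d⟩ hx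
    simp only [AddMonoidHom.mem_ker, phi, AddMonoidHom.mk'_apply, Prod.mk_eq_zero] at hx
    obtain ⟨h1, h2, h3⟩ := hx
    obtain ⟨k2, hk2⟩ := (ZMod.intCast_zmod_eq_zero_iff_dvd _ 3).mp h1
    obtain ⟨k3, hk3⟩ := (ZMod.intCast_zmod_eq_zero_iff_dvd _ 3).mp h2
    obtain ⟨k4, hk4⟩ := (ZMod.intCast_zmod_eq_zero_iff_dvd _ 9).mp h3
    push_cast at hk2 hk3 hk4
    have hv1 : v1 ∈ L' := AddSubgroup.subset_closure (by simp)
    have hv2 : v2 ∈ L' := AddSubgroup.subset_closure (by simp)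
    have hv3 : v3 ∈ L' := AddSubgroup.subset_closure (by simp)
    have hv4 : v4 ∈ L' := AddSubgroup.subset_closure (by simp [v4])
    have key : ((a, b, c, d) : G) = (-a + k2 - k3 - 3 * k4) • v1 + (k2 + k3 + k4) • v2
        + (k3 + k4) • v3 + k4 • v4 := by
      simp only [v1, v2, v3, v4, Prod.smul_mk, smul_eq_mul, Prod.mk_add_mk, Prod.mk.injEq]
      refine ⟨by linarith, by linarith, by linarith, by linarith⟩
    rw [key]
    exact AddSubgroup.add_mem _ (AddSubgroup.add_mem _ (AddSubgroup.add_mem _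
      (AddSubgroup.zsmul_mem _ hv1 _) (AddSubgroup.zsmul_mem _ hv2 _))
      (AddSubgroup.zsmul_mem _ hv3 _)) (AddSubgroup.zsmul_mem _ hv4 _)
  · rw [L', AddSubgroup.closure_le]
    rintro x hx
    simp only [Set.mem_insert_iff, Set.mem_singleton_iff] at hx
    rcases hx with rfl | rfl | rfl | rfl <;>
      · simp only [SetLike.mem_coe, AddMonoidHom.mem_ker, phi, v1, v2, v3, v4,
          AddMonoidHom.mk'_apply]
        decide

lemma phi_surjective : Function.Surjective phi := by
  rintro ⟨p, q, r⟩
  obtain ⟨p', rfl⟩ := ZMod.intCast_surjective p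
  obtain ⟨q', rfl⟩ := ZMod.intCast_surjective q
  obtain ⟨r', rfl⟩ := ZMod.intCast_surjective r
  refine ⟨(p', 0, q', r' + p' + q'), ?_⟩
  simp only [phi, AddMonoidHom.mk'_apply]
  refine Prod.ext ?_ (Prod.ext ?_ ?_) <;> · push_cast; ring_nf

lemma index_L' : L'.index = 81 := by
  rw [← ker_phi, AddSubgroup.index_ker, AddMonoidHom.range_eq_top.mpr phi_surjective]
  rw [show Nat.card (⊤ : AddSubgroup (ZMod 3 × ZMod 3 × ZMod 9))
      = Nat.card (ZMod 3 × ZMod 3 × ZMod 9) from Nat.card_congr AddSubgroup.topEquiv.toEquiv]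
  simp [Nat.card_eq_fintype_card, ZMod.card]

end Aux

/-- L has index 81 in O as an additive subgroup. -/
theorem L_index_81 :
    LAdd ≤ OAdd ∧ (LAdd.addSubgroupOf OAdd).index = 81 := by
  have hle : LAdd ≤ OAdd := by
    rw [← Aux.range_F, ← Aux.map_L']
    rintro x ⟨y, _, rfl⟩
    exact ⟨y, rfl⟩
  refine ⟨hle, ?_⟩
  have hO : OAdd = Aux.F.range := Aux.range_F.symm
  rw [hO]
  have hcomap : (LAdd.addSubgroupOf Aux.F.range).comap Aux.F.rangeRestrict = Aux.L' := by
    ext x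
    simp only [AddSubgroup.mem_comap, AddSubgroup.mem_addSubgroupOf,
      AddMonoidHom.coe_rangeRestrict]
    rw [← Aux.map_L']
    constructor
    · rintro ⟨y, hy, hxy⟩
      exact Aux.F_injective hxy ▸ hy
    · intro h
      exact ⟨x, h, rfl⟩
  rw [← AddSubgroup.index_comap_of_surjective (LAdd.addSubgroupOf Aux.F.range)
      Aux.F.rangeRestrict_surjective, hcomap, Aux.index_L']
end

section
/- The lattice 𝓛 = {(x, x*) : x ∈ L} ⊂ ℂ² ≅ ℝ⁴, where L ⊂ ℤ[ξ, λ] has index 81 and (·)* is the Minkowski embedding sending ξ ↦ ξ̄ and λ ↦ 8 − λ, has covolume V = (3/4)·det((1, λ; 1, 8−λ))²·81 = 3645. -/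
/-- Images of ξ and λ under the Minkowski embedding (Galois conjugation):
ξ ↦ ξ̄ and λ ↦ 8 − λ = 4 − √15. -/
noncomputable def xis : ℂ := (1 - Complex.I * (Real.sqrt 3 : ℂ)) / 2
noncomputable def lams : ℂ := 4 - (Real.sqrt 15 : ℂ)

noncomputable def g1s : ℂ := -1 - xis + lams - 2 * (lams * xis)
noncomputable def g2s : ℂ := xis * g1s
noncomputable def g3s : ℂ := -2 + xis + 2 * lams + 2 * (lams * xis)
noncomputable def g4s : ℂ := -2 - 2 * xis - lams + 2 * (lams * xis)

/-- The Gram/coordinate matrix of the lattice 𝓛 = {(x, x*) : x ∈ L} ⊂ ℂ² ≅ ℝ⁴,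
with rows the lifted generators (gᵢ, gᵢ*) written in real coordinates. -/
noncomputable def latticeMatrix : Matrix (Fin 4) (Fin 4) ℝ :=
  Matrix.of
    ![![g1.re, g1.im, g1s.re, g1s.im],
      ![g2.re, g2.im, g2s.re, g2s.im],
      ![g3.re, g3.im, g3s.re, g3s.im],
      ![g4.re, g4.im, g4s.re, g4s.im]]

set_option maxHeartbeats 2000000 in
/-- The covolume of the lattice 𝓛 (the volume of its fundamental cell with
respect to Lebesgue measure on ℝ⁴ ≅ ℂ²) equals 3645. -/
theorem lattice_covolume : |latticeMatrix.det| = 3645 := by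
  set a := Real.sqrt 3 with ha
  set b := Real.sqrt 15 with hb
  have h3 : a * a = 3 := Real.mul_self_sqrt (by norm_num)
  have h15 : b * b = 15 := Real.mul_self_sqrt (by norm_num)
  have hxi : xi = Complex.mk (1/2) (a/2) := by
    rw [Complex.ext_iff]; constructor <;>
      simp [xi, Complex.div_re, Complex.div_im, Complex.normSq] <;> ring
  have hxis : xis = Complex.mk (1/2) (-(a/2)) := by
    rw [Complex.ext_iff]; constructor <;>
      simp [xis, Complex.div_re, Complex.div_im, Complex.normSq] <;> ring
  have hlam : lam = Complex.mk (4+b) 0 := by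
    rw [Complex.ext_iff]; constructor <;> simp [lam, hb]
  have hlams : lams = Complex.mk (4-b) 0 := by
    rw [Complex.ext_iff]; constructor <;> simp [lams, hb]
  have hg1 : g1 = Complex.mk (-3/2) (-9/2*a - a*b) := by
    rw [g1, hxi, hlam, Complex.ext_iff]; constructor <;>
      simp [Complex.mul_re, Complex.mul_im] <;> ring
  have hg2 : g2 = Complex.mk (-3/4 + 9/4*(a*a) + 1/2*(a*a*b)) (-3*a - 1/2*(a*b)) := by
    rw [g2, hxi, hg1, Complex.ext_iff]; constructor <;>
      simp [Complex.mul_re, Complex.mul_im] <;> ring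
  have hg3 : g3 = Complex.mk (21/2 + 3*b) (9/2*a + a*b) := by
    rw [g3, hxi, hlam, Complex.ext_iff]; constructor <;>
      simp [Complex.mul_re, Complex.mul_im] <;> ring
  have hg4 : g4 = Complex.mk (-3) (3*a + a*b) := by
    rw [g4, hxi, hlam, Complex.ext_iff]; constructor <;>
      simp [Complex.mul_re, Complex.mul_im] <;> ring
  have hg1s : g1s = Complex.mk (-3/2) (9/2*a - a*b) := by
    rw [g1s, hxis, hlams, Complex.ext_iff]; constructor <;>
      simp [Complex.mul_re, Complex.mul_im] <;> ring
  have hg2s : g2s = Complex.mk (-3/4 + 9/4*(a*a) - 1/2*(a*a*b)) (3*a - 1/2*(a*b)) := by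
    rw [g2s, hxis, hg1s, Complex.ext_iff]; constructor <;>
      simp [Complex.mul_re, Complex.mul_im] <;> ring
  have hg3s : g3s = Complex.mk (21/2 - 3*b) (-9/2*a + a*b) := by
    rw [g3s, hxis, hlams, Complex.ext_iff]; constructor <;>
      simp [Complex.mul_re, Complex.mul_im] <;> ring
  have hg4s : g4s = Complex.mk (-3) (-3*a + a*b) := by
    rw [g4s, hxis, hlams, Complex.ext_iff]; constructor <;>
      simp [Complex.mul_re, Complex.mul_im] <;> ring
  have hdet : latticeMatrix.det = -3645 := by
    rw [latticeMatrix]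
    simp only [hg1, hg2, hg3, hg4, hg1s, hg2s, hg3s, hg4s]
    simp [Matrix.det_succ_row_zero, Fin.sum_univ_succ, Fin.succAbove,
      Matrix.cons_val_zero, Matrix.cons_val_one, Matrix.head_cons, Matrix.cons_val_succ,
      Fin.cons_zero, Fin.cons_succ, Fin.castSucc, Fin.castAdd, Fin.castLE,
      Matrix.cons_val_two, Matrix.cons_val_three, Matrix.tail_cons]
    linear_combination (-81*(b*b) - 27/2*(a*a)*(b*b)) * h3 + (-243 : ℝ) * h15
  rw [hdet]
  norm_num
end
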